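/- If a family τ_ℓ(z) satisfies τ_0 = 1 and the determinant formula τ_ℓ(z) = det(tridiagonal matrix with diagonal τ_1(zq^{i−1}) and off-diagonal 1's), then it satisfies the Hirota-type bilinear relation τ_ℓ(zq^{1/2}) τ_ℓ(zq^{-1/2}) = τ_{ℓ+1}(zq^{-1/2}) τ_{ℓ−1}(zq^{1/2}) + 1 for ℓ ≥ 1 (in the convention where shifts are as in the recursion τ_1(z)τ_ℓ(zq) = τ_{ℓ+1}(z) + τ_{ℓ−1}(zq²)). -/

import Mathlib

/-!
Expanding the tridiagonal determinant along its first row gives the continuant recursion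
`τ_{ℓ+2}(z) = τ₁(z) τ_{ℓ+1}(zq) − τ_ℓ(zq²)`. For any solution of it the Casoratian
`C_ℓ(z) = τ_{ℓ+1}(zq) τ_{ℓ+1}(z) − τ_{ℓ+2}(z) τ_ℓ(zq)` satisfies `C_{ℓ+1}(z) = C_ℓ(zq)`,
and `C_0 = 1` because `τ₀ = 1`. Evaluating at `zq^{−1/2}` gives the relation.
-/

/-- The `ℓ×ℓ` tridiagonal matrix with diagonal entries
`τ₁(z), τ₁(zq), …, τ₁(zq^{ℓ−1})` and off-diagonal entries `1`. -/
noncomputable def triDiag (τ1 : ℂ → ℂ) (q z : ℂ) (ℓ : ℕ) :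
    Matrix (Fin ℓ) (Fin ℓ) ℂ :=
  fun i j =>
    if i = j then τ1 (z * q ^ (i : ℕ))
    else if (i : ℕ) + 1 = (j : ℕ) ∨ (j : ℕ) + 1 = (i : ℕ) then 1
    else 0

theorem casoratian_eq_one {α R : Type*} [CommRing R] (s : α → α) (f : ℕ → α → R)
    (h0 : ∀ x, f 0 x = 1)
    (hrec : ∀ n x, f (n + 2) x = f 1 x * f (n + 1) (s x) - f n (s (s x))) :
    ∀ n x, f (n + 1) (s x) * f (n + 1) x = f (n + 2) x * f n (s x) + 1 := by
  intro n
  induction n with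
  | zero =>
    intro x
    rw [hrec 0 x, h0, h0]
    ring
  | succ n ih =>
    intro x
    rw [hrec (n + 1) x, hrec n x]
    linear_combination ih (s x)

namespace triDiag

variable (t : ℂ → ℂ) (q z : ℂ) (n : ℕ)

theorem submatrix_succ :
    (triDiag t q z (n + 1)).submatrix Fin.succ Fin.succ = triDiag t q (z * q) n := by
  ext i j
  have hdiag : z * q ^ ((i : ℕ) + 1) = z * q * q ^ (i : ℕ) := by ring
  have hadj : (i : ℕ) + 1 + 1 = (j : ℕ) + 1 ∨ (j : ℕ) + 1 + 1 = (i : ℕ) + 1 ↔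
      (i : ℕ) + 1 = j ∨ (j : ℕ) + 1 = i := by omega
  simp only [Matrix.submatrix_apply, triDiag, Fin.val_succ, Fin.succ_inj, hdiag, hadj]

/-- Deleting row `0` and column `1` leaves a matrix whose first column is the unit vector `e₀`. -/
theorem det_submatrix_succ_succAbove_one :
    ((triDiag t q z (n + 2)).submatrix Fin.succ (Fin.succAbove 1)).det =
      (triDiag t q (z * q * q) n).det := by
  have hcol : ∀ i : Fin (n + 1),
      (triDiag t q z (n + 2)).submatrix Fin.succ (Fin.succAbove 1) i 0 = if i = 0 then 1 else 0 := by
    intro i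
    rw [Matrix.submatrix_apply, show (1 : Fin (n + 2)) = Fin.succ 0 from rfl,
      Fin.succ_succAbove_zero]
    cases i using Fin.cases with
    | zero => simp [triDiag]
    | succ i => simp [triDiag, Fin.succ_ne_zero]
  have hcols : (Fin.succAbove (1 : Fin (n + 2))) ∘ Fin.succ = Fin.succ ∘ Fin.succ := by
    funext j
    exact Fin.succ_succAbove_succ 0 j
  rw [Matrix.det_succ_column_zero, Fin.sum_univ_succ,
    Finset.sum_eq_zero fun i _ => by rw [hcol, if_neg i.succ_ne_zero, mul_zero, zero_mul],
    hcol, Fin.succAbove_zero, Matrix.submatrix_submatrix, hcols, ← Matrix.submatrix_submatrix,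
    submatrix_succ, submatrix_succ]
  simp

theorem det_add_two :
    (triDiag t q z (n + 2)).det =
      t z * (triDiag t q (z * q) (n + 1)).det - (triDiag t q (z * q * q) n).det := by
  have h00 : triDiag t q z (n + 2) 0 0 = t z := by simp [triDiag]
  have h01 : triDiag t q z (n + 2) 0 1 = 1 := by simp [triDiag]
  have hrow : ∀ j : Fin n, triDiag t q z (n + 2) 0 j.succ.succ = 0 := by
    intro j
    simp [triDiag, Fin.ext_iff]
  rw [Matrix.det_succ_row_zero, Fin.sum_univ_succ, Fin.sum_univ_succ,
    Finset.sum_eq_zero fun j _ => by rw [hrow j, mul_zero, zero_mul], add_zero,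
    Fin.succAbove_zero, submatrix_succ, show (Fin.succ 0 : Fin (n + 2)) = 1 from rfl,
    det_submatrix_succ_succAbove_one, h00, h01, Fin.val_zero, Fin.val_one, pow_zero, pow_one]
  ring

end triDiag

/-- If `τ₀ = 1` and `τ_ℓ(z)` is given by the tridiagonal determinant formula,
then the Hirota-type bilinear relation
`τ_ℓ(zq^{1/2}) τ_ℓ(zq^{−1/2}) = τ_{ℓ+1}(zq^{−1/2}) τ_{ℓ−1}(zq^{1/2}) + 1`
holds for `ℓ ≥ 1` (`sq` is a fixed square root of `q`). -/
theorem fusion_hirota (τ : ℕ → ℂ → ℂ) (q sq : ℂ)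
    (hsq : sq ^ 2 = q) (hsq0 : sq ≠ 0)
    (h0 : ∀ z, τ 0 z = 1)
    (hdet : ∀ (ℓ : ℕ) (z : ℂ), τ ℓ z = (triDiag (τ 1) q z ℓ).det) :
    ∀ (ℓ : ℕ) (z : ℂ),
      τ (ℓ + 1) (z * sq) * τ (ℓ + 1) (z * sq⁻¹) =
        τ (ℓ + 2) (z * sq⁻¹) * τ ℓ (z * sq) + 1 := by
  have hrec : ∀ n z, τ (n + 2) z = τ 1 z * τ (n + 1) (z * q) - τ n (z * q * q) := by
    intro n z
    rw [hdet (n + 2), hdet (n + 1), hdet n, triDiag.det_add_two]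
  intro ℓ z
  have hshift : z * sq⁻¹ * q = z * sq := by
    rw [← hsq]
    field_simp
  simpa only [hshift] using casoratian_eq_one (· * q) τ h0 hrec ℓ (z * sq⁻¹)
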